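/- Let $A$ be a pro-Noetherian admissible ring and $I \subseteq A$ an ideal of definition. Then for any open neighborhood $V$ of $0$, there exists $n \in \mathbb{N}$ such that $I^n \subseteq V$. -/

import Mathlib

/-!
Shrink `V` to an open ideal `J` from the defining chain. Every element of an ideal of definition
`I` is topologically nilpotent, so some power of it lands in `J`, i.e. `I ≤ √J`. In the Noetherian
ring `A ⧸ J` the image of `I` is finitely generated and consists of nilpotents, hence is itself
nilpotent; pulling back, `I ^ n ≤ J ⊆ V` for some `n`.
-/

open Filter Topology

/-- The descending chain `I` of ideals is a basis of neighborhoods of `0`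
(this is the `{Iᵢ}`-topology). -/
def IsChainBasis (A : Type*) [CommRing A] [TopologicalSpace A] (I : ℕ → Ideal A) : Prop :=
  Antitone I ∧ ∀ s : Set A, s ∈ nhds (0 : A) ↔ ∃ i, (I i : Set A) ⊆ s

/-- An ideal of definition: an open ideal all of whose elements are topologically nilpotent. -/
def IsIdealOfDefinition (A : Type*) [CommRing A] [TopologicalSpace A] (J : Ideal A) : Prop :=
  IsOpen (J : Set A) ∧ ∀ x ∈ J, Filter.Tendsto (fun n => x ^ n) Filter.atTop (nhds (0 : A))

/-- An admissible ring: a topological ring, linearly topologized with a countable chain of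
ideals as a basis of neighborhoods of `0`, separated, complete, admitting an ideal of
definition. -/
structure IsAdmissible (A : Type*) [CommRing A] [TopologicalSpace A] : Prop where
  topRing : IsTopologicalRing A
  exists_chain : ∃ I : ℕ → Ideal A, IsChainBasis A I
  separated : ∀ x : A, (∀ U ∈ nhds (0 : A), x ∈ U) → x = 0
  complete : ∀ f : ℕ → A,
    (∀ U ∈ nhds (0 : A), ∃ N, ∀ m ≥ N, ∀ n ≥ N, f m - f n ∈ U) →
    ∃ a : A, ∀ U ∈ nhds (0 : A), ∃ N, ∀ n ≥ N, a - f n ∈ U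
  exists_idealOfDef : ∃ J : Ideal A, IsIdealOfDefinition A J

/-- The topology of `A` is the `J`-adic topology: the powers `J ^ n` form a basis of
neighborhoods of `0`. -/
def IsAdicTopology (A : Type*) [CommRing A] [TopologicalSpace A] (J : Ideal A) : Prop :=
  ∀ s : Set A, s ∈ nhds (0 : A) ↔ ∃ n : ℕ, ((J ^ n : Ideal A) : Set A) ⊆ s

theorem Ideal.exists_pow_le_of_le_radical_of_isNoetherianRing_quotient {A : Type*} [CommRing A]
    {I J : Ideal A} [IsNoetherianRing (A ⧸ J)] (h : I ≤ J.radical) :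
    ∃ n : ℕ, I ^ n ≤ J := by
  have hmap : I.map (Ideal.Quotient.mk J) ≤ (⊥ : Ideal (A ⧸ J)).radical := by
    rw [← Ideal.map_quotient_self J, ← Ideal.map_radical_of_surjective
      Ideal.Quotient.mk_surjective (by simp)]
    exact Ideal.map_mono h
  obtain ⟨n, hn⟩ := Ideal.exists_pow_le_of_le_radical_of_fg hmap (IsNoetherian.noetherian _)
  refine ⟨n, fun x hx => ?_⟩
  rw [← Ideal.map_pow] at hn
  simpa [Ideal.Quotient.eq_zero_iff_mem] using hn (Ideal.mem_map_of_mem _ hx)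

theorem IsChainBasis.exists_isOpen_ideal_subset {A : Type*} [CommRing A] [TopologicalSpace A]
    [IsTopologicalAddGroup A] {I : ℕ → Ideal A} (hI : IsChainBasis A I) {V : Set A}
    (hV : V ∈ 𝓝 (0 : A)) : ∃ J : Ideal A, IsOpen (J : Set A) ∧ (J : Set A) ⊆ V := by
  obtain ⟨i, hiV⟩ := (hI.2 V).mp hV
  exact ⟨I i, AddSubgroup.isOpen_of_mem_nhds (I i).toAddSubgroup ((hI.2 _).mpr ⟨i, le_rfl⟩), hiV⟩

theorem IsIdealOfDefinition.le_radical {A : Type*} [CommRing A] [TopologicalSpace A]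
    {I J : Ideal A} (hI : IsIdealOfDefinition A I) (hJ : (J : Set A) ∈ 𝓝 (0 : A)) :
    I ≤ J.radical :=
  fun x hx => ((hI.2 x hx).eventually_mem hJ).exists

theorem stmt_3 (A : Type*) [CommRing A] [TopologicalSpace A] (hA : IsAdmissible A)
    (hpro : ∀ J : Ideal A, IsOpen (J : Set A) → IsNoetherianRing (A ⧸ J))
    (I : Ideal A) (hI : IsIdealOfDefinition A I)
    (V : Set A) (hV : V ∈ nhds (0 : A)) :
    ∃ n : ℕ, ((I ^ n : Ideal A) : Set A) ⊆ V := by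
  have := hA.topRing
  obtain ⟨_, hchain⟩ := hA.exists_chain
  obtain ⟨J, hJopen, hJV⟩ := hchain.exists_isOpen_ideal_subset hV
  have := hpro J hJopen
  obtain ⟨n, hn⟩ := Ideal.exists_pow_le_of_le_radical_of_isNoetherianRing_quotient
    (hI.le_radical (hJopen.mem_nhds J.zero_mem))
  exact ⟨n, hJV.trans' hn⟩
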